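/- arXiv:1806.07946 — 6 statements merged into one kernel-verified Lean document; each statement's English description precedes it below -/
import Mathlib

section
/- For all n ∈ ℕ, all x, y ∈ [0,1], and every convex continuous function f : [0,1] → ℝ, one has ∑_{i=0}^n ∑_{j=0}^n [b_{n,i}(x) b_{n,j}(x) + b_{n,i}(y) b_{n,j}(y) − 2 b_{n,i}(x) b_{n,j}(y)] f((i+j)/(2n)) ≥ 0. -/
/-!
Write `u = b_{n,·}(x)` and `v = b_{n,·}(y)` and `g a b = f ((a + b) / 2n)`. Since `g` is symmetric,
the sum is the quadratic form `∑ (u a - v a) (u b - v b) g a b`, so we may assume `x ≤ y`.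
Count how many of `n` independent uniform variables fall below `x` and below `y`: this couples
`X ~ Bin(n, x)` with `Y ~ Bin(n, y)` so that `X ≤ Y`. With an independent copy `(X', Y')` the
quadratic form equals `𝔼[g X X' + g Y Y' - g X Y' - g Y X']`, and each such term is nonnegative
because `(a, b) ↦ f (a + b)` is supermodular when `f` is convex.
-/

/-- Bernstein basis polynomial `b_{n,k}(x) = C(n,k) x^k (1-x)^(n-k)`. -/
def bern (n k : ℕ) (x : ℝ) : ℝ := (n.choose k : ℝ) * x ^ k * (1 - x) ^ (n - k)

open Finset

theorem ConvexOn.add_le_add_of_le_of_le_of_add_eq {s : Set ℝ} {f : ℝ → ℝ} (hf : ConvexOn ℝ s f)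
    {a b c d : ℝ} (hc : c ∈ s) (hd : d ∈ s) (hca : c ≤ a) (had : a ≤ d) (hsum : a + b = c + d) :
    f a + f b ≤ f c + f d := by
  rcases (hca.trans had).eq_or_lt with rfl | hcd
  · obtain rfl : a = c := le_antisymm had hca
    obtain rfl : b = a := by linarith
    rfl
  set t := (d - a) / (d - c)
  have ht : t * (d - c) = d - a := div_mul_cancel₀ _ (sub_pos.2 hcd).ne'
  have ht0 : 0 ≤ t := div_nonneg (sub_nonneg.2 had) (sub_pos.2 hcd).le
  have ht1 : t ≤ 1 := div_le_one_of_le₀ (by linarith) (sub_pos.2 hcd).le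
  have ha := hf.2 hc hd ht0 (sub_nonneg.2 ht1) (add_sub_cancel t 1)
  have hb := hf.2 hc hd (sub_nonneg.2 ht1) ht0 (sub_add_cancel 1 t)
  simp only [smul_eq_mul] at ha hb
  rw [show t * c + (1 - t) * d = a by linarith] at ha
  rw [show (1 - t) * c + t * d = b by linarith] at hb
  linarith

theorem ConvexOn.map_add_add_map_add_le {s : Set ℝ} {f : ℝ → ℝ} (hf : ConvexOn ℝ s f)
    {a b c d : ℝ} (hac : a + c ∈ s) (hbd : b + d ∈ s) (hab : a ≤ b) (hcd : c ≤ d) :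
    f (a + d) + f (b + c) ≤ f (a + c) + f (b + d) :=
  hf.add_le_add_of_le_of_le_of_add_eq hac hbd (by linarith) (by linarith) (by ring)

theorem ConvexOn.map_add_div_add_map_add_div_le {f : ℝ → ℝ} (hf : ConvexOn ℝ (Set.Icc 0 1) f)
    {n i j i' j' : ℕ} (hj : j ≤ n) (hj' : j' ≤ n) (hij : i ≤ j) (hij' : i' ≤ j') :
    f ((i + j' : ℝ) / (2 * n)) + f ((j + i' : ℝ) / (2 * n))
      ≤ f ((i + i' : ℝ) / (2 * n)) + f ((j + j' : ℝ) / (2 * n)) := by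
  have hmem {a b : ℕ} (ha : a ≤ n) (hb : b ≤ n) :
      (a / (2 * n) + b / (2 * n) : ℝ) ∈ Set.Icc (0 : ℝ) 1 := by
    rw [← add_div]
    exact ⟨by positivity, div_le_one_of_le₀ (by norm_cast; omega) (by positivity)⟩
  simp only [add_div]
  exact hf.map_add_add_map_add_le (hmem (hij.trans hj) (hij'.trans hj')) (hmem hj hj')
    (div_le_div_of_nonneg_right (by exact_mod_cast hij) (by positivity))
    (div_le_div_of_nonneg_right (by exact_mod_cast hij') (by positivity))

section Coupling

variable {ι : Type*} (S : Finset ι) {u v : ι → ℝ}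

theorem sum_sum_mul_sub_two_mul_mul_eq {h : ι → ι → ℝ} (hh : ∀ a b, h a b = h b a) :
    ∑ a ∈ S, ∑ b ∈ S, (u a * u b + v a * v b - 2 * u a * v b) * h a b
      = ∑ a ∈ S, ∑ b ∈ S, (u a - v a) * (u b - v b) * h a b := by
  have hcross : ∑ a ∈ S, ∑ b ∈ S, v a * u b * h a b = ∑ a ∈ S, ∑ b ∈ S, u a * v b * h a b := by
    rw [sum_comm]
    exact sum_congr rfl fun a _ => sum_congr rfl fun b _ => by rw [hh]; ring
  calc ∑ a ∈ S, ∑ b ∈ S, (u a * u b + v a * v b - 2 * u a * v b) * h a b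
      = ∑ a ∈ S, ∑ b ∈ S, ((u a - v a) * (u b - v b) * h a b
          + (v a * u b * h a b - u a * v b * h a b)) :=
        sum_congr rfl fun a _ => sum_congr rfl fun b _ => by ring
    _ = ∑ a ∈ S, ∑ b ∈ S, (u a - v a) * (u b - v b) * h a b := by
        simp only [sum_add_distrib, sum_sub_distrib, hcross, sub_self, add_zero]

variable (q : ι → ι → ℝ)

theorem sum_product_mul_sub_eq_of_marginals (hu : ∀ a ∈ S, ∑ b ∈ S, q a b = u a)
    (hv : ∀ b ∈ S, ∑ a ∈ S, q a b = v b) (F : ι → ℝ) :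
    ∑ t ∈ S ×ˢ S, q t.1 t.2 * (F t.1 - F t.2) = ∑ a ∈ S, (u a - v a) * F a := by
  simp only [mul_sub, sum_sub_distrib, sub_mul]
  rw [sum_product, sum_product_right]
  congr 1 <;> refine sum_congr rfl fun a ha => ?_
  · rw [← hu a ha, sum_mul]
  · rw [← hv a ha, sum_mul]

theorem sum_sum_sub_mul_sub_mul_nonneg [Preorder ι] (hq : ∀ i j, 0 ≤ q i j)
    (hq_le : ∀ i j, q i j ≠ 0 → i ≤ j) (hu : ∀ a ∈ S, ∑ b ∈ S, q a b = u a)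
    (hv : ∀ b ∈ S, ∑ a ∈ S, q a b = v b) {h : ι → ι → ℝ}
    (hh : ∀ i ∈ S, ∀ j ∈ S, ∀ i' ∈ S, ∀ j' ∈ S, i ≤ j → i' ≤ j' →
      h i j' + h j i' ≤ h i i' + h j j') :
    0 ≤ ∑ a ∈ S, ∑ b ∈ S, (u a - v a) * (u b - v b) * h a b := by
  have marg := sum_product_mul_sub_eq_of_marginals S q hu hv
  have hsum : ∑ a ∈ S, ∑ b ∈ S, (u a - v a) * (u b - v b) * h a b
      = ∑ t ∈ S ×ˢ S, q t.1 t.2 * ((∑ t' ∈ S ×ˢ S, q t'.1 t'.2 * (h t.1 t'.1 - h t.1 t'.2))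
        - ∑ t' ∈ S ×ˢ S, q t'.1 t'.2 * (h t.2 t'.1 - h t.2 t'.2)) := by
    simp only [marg]
    rw [marg fun a => ∑ b ∈ S, (u b - v b) * h a b]
    simp only [mul_sum]
    exact sum_congr rfl fun a _ => sum_congr rfl fun b _ => by ring
  have weight : ∀ i j (X : ℝ), (i ≤ j → 0 ≤ X) → 0 ≤ q i j * X := fun i j X hX => by
    by_cases h0 : q i j = 0
    · simp [h0]
    · exact mul_nonneg (hq i j) (hX (hq_le i j h0))
  rw [hsum]
  refine sum_nonneg fun t ht => weight _ _ _ fun hij => ?_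
  rw [← sum_sub_distrib]
  refine sum_nonneg fun t' ht' => ?_
  rw [← mul_sub]
  refine weight _ _ _ fun hij' => ?_
  rw [mem_product] at ht ht'
  linarith [hh _ ht.1 _ ht.2 _ ht'.1 _ ht'.2 hij hij']

end Coupling

/-- The joint law of the numbers of `n` independent uniform variables that fall below `x` and
below `y`, for `x ≤ y`. -/
def trinomialCoupling (n : ℕ) (x y : ℝ) (i j : ℕ) : ℝ :=
  if i ≤ j then (n.choose j : ℝ) * (j.choose i : ℝ) * x ^ i * (y - x) ^ (j - i) * (1 - y) ^ (n - j)
  else 0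

namespace trinomialCoupling

variable {n : ℕ} {x y : ℝ}

theorem nonneg (hx : 0 ≤ x) (hxy : x ≤ y) (hy : y ≤ 1) (i j : ℕ) :
    0 ≤ trinomialCoupling n x y i j := by
  unfold trinomialCoupling
  split_ifs
  · have := sub_nonneg.2 hxy
    have := sub_nonneg.2 hy
    positivity
  · rfl

theorem of_not_le {i j : ℕ} (h : ¬i ≤ j) : trinomialCoupling n x y i j = 0 :=
  if_neg h

theorem le_of_ne_zero {i j : ℕ} (h : trinomialCoupling n x y i j ≠ 0) : i ≤ j :=
  not_not.1 (mt of_not_le h)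

theorem sum_right {i : ℕ} (hi : i ≤ n) :
    ∑ j ∈ range (n + 1), trinomialCoupling n x y i j = bern n i x := by
  rw [← sum_range_add_sum_Ico _ (by omega : i ≤ n + 1), sum_Ico_eq_sum_range,
    sum_eq_zero fun j hj => of_not_le (by simp at hj; omega), zero_add]
  have hterm : ∀ k ∈ range (n - i + 1), trinomialCoupling n x y i (i + k)
      = (n.choose i * x ^ i) * ((y - x) ^ k * (1 - y) ^ (n - i - k) * (n - i).choose k) := by
    intro k _
    have hchoose : (n.choose (i + k) : ℝ) * (i + k).choose i = n.choose i * (n - i).choose k := by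
      have := Nat.choose_mul (n := n) (Nat.le_add_right i k)
      rw [Nat.add_sub_cancel_left] at this
      exact_mod_cast this
    rw [trinomialCoupling, if_pos (Nat.le_add_right i k), Nat.add_sub_cancel_left,
      (by omega : n - (i + k) = n - i - k)]
    linear_combination x ^ i * (y - x) ^ k * (1 - y) ^ (n - i - k) * hchoose
  rw [(by omega : n + 1 - i = n - i + 1), sum_congr rfl hterm, ← mul_sum, ← add_pow,
    sub_add_sub_cancel', bern]

theorem sum_left {j : ℕ} (hj : j ≤ n) :
    ∑ i ∈ range (n + 1), trinomialCoupling n x y i j = bern n j y := by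
  rw [← sum_range_add_sum_Ico _ (by omega : j + 1 ≤ n + 1),
    sum_eq_zero (s := Ico _ _) fun i hi => of_not_le (by simp at hi; omega), add_zero]
  have hterm : ∀ i ∈ range (j + 1), trinomialCoupling n x y i j
      = (n.choose j * (1 - y) ^ (n - j)) * (x ^ i * (y - x) ^ (j - i) * j.choose i) := by
    intro i hi
    rw [trinomialCoupling, if_pos (by simp at hi; omega)]
    ring
  rw [sum_congr rfl hterm, ← mul_sum, ← add_pow, add_sub_cancel, bern]
  ring

end trinomialCoupling

theorem sum_sum_bern_sub_mul_bern_sub_mul_nonneg {n : ℕ} {x y : ℝ} (hx : 0 ≤ x) (hxy : x ≤ y)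
    (hy : y ≤ 1) {f : ℝ → ℝ} (hf : ConvexOn ℝ (Set.Icc 0 1) f) :
    0 ≤ ∑ a ∈ range (n + 1), ∑ b ∈ range (n + 1),
      (bern n a x - bern n a y) * (bern n b x - bern n b y) * f ((a + b : ℝ) / (2 * n)) :=
  sum_sum_sub_mul_sub_mul_nonneg _ (trinomialCoupling n x y)
    (trinomialCoupling.nonneg hx hxy hy) (fun _ _ => trinomialCoupling.le_of_ne_zero)
    (fun _ ha => trinomialCoupling.sum_right (mem_range_succ_iff.1 ha))
    (fun _ hb => trinomialCoupling.sum_left (mem_range_succ_iff.1 hb))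
    (fun _ _ _ hj _ _ _ hj' hij hij' =>
      hf.map_add_div_add_map_add_div_le (mem_range_succ_iff.1 hj) (mem_range_succ_iff.1 hj')
        hij hij')

theorem stmt0_general (n : ℕ) (x y : ℝ) (hx : x ∈ Set.Icc (0:ℝ) 1) (hy : y ∈ Set.Icc (0:ℝ) 1)
    (f : ℝ → ℝ) (hf : ConvexOn ℝ (Set.Icc 0 1) f) :
    0 ≤ ∑ i ∈ Finset.range (n+1), ∑ j ∈ Finset.range (n+1),
      (bern n i x * bern n j x + bern n i y * bern n j y - 2 * bern n i x * bern n j y)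
        * f ((i + j : ℝ) / (2 * n)) := by
  rw [sum_sum_mul_sub_two_mul_mul_eq _ fun a b => by rw [add_comm]]
  rcases le_total x y with hxy | hyx
  · exact sum_sum_bern_sub_mul_bern_sub_mul_nonneg hx.1 hxy hy.2 hf
  · calc 0 ≤ ∑ a ∈ range (n + 1), ∑ b ∈ range (n + 1),
          (bern n a y - bern n a x) * (bern n b y - bern n b x) * f ((a + b : ℝ) / (2 * n)) :=
          sum_sum_bern_sub_mul_bern_sub_mul_nonneg hy.1 hyx hx.2 hf
      _ = _ := sum_congr rfl fun a _ => sum_congr rfl fun b _ => by ring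

theorem stmt0 (n : ℕ) (x y : ℝ) (hx : x ∈ Set.Icc (0:ℝ) 1) (hy : y ∈ Set.Icc (0:ℝ) 1)
    (f : ℝ → ℝ) (hf : ConvexOn ℝ (Set.Icc 0 1) f) (hfc : ContinuousOn f (Set.Icc 0 1)) :
    0 ≤ ∑ i ∈ Finset.range (n+1), ∑ j ∈ Finset.range (n+1),
      (bern n i x * bern n j x + bern n i y * bern n j y - 2 * bern n i x * bern n j y)
        * f ((i + j : ℝ) / (2 * n)) :=
  stmt0_general n x y hx hy f hf
end

section
/- Let m, n ∈ ℕ with m ≥ 2. For every convex continuous function f : [0,1] → ℝ and all x₁, …, x_m ∈ [0,1], one has ∑_{i₁,…,i_m=0}^n [b_{n,i₁}(x₁)⋯b_{n,i_m}(x₁) + ⋯ + b_{n,i₁}(x_m)⋯b_{n,i_m}(x_m) − m·b_{n,i₁}(x₁)⋯b_{n,i_m}(x_m)] · f((i₁+⋯+i_m)/(mn)) ≥ 0. -/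
open Polynomial Finset

def nonnegCoeffs : Subsemiring ℝ[X] where
  carrier := {P | ∀ k, 0 ≤ P.coeff k}
  mul_mem' {P Q} hP hQ k := by
    rw [coeff_mul]
    exact sum_nonneg fun p _ => mul_nonneg (hP p.1) (hQ p.2)
  one_mem' k := by
    rw [coeff_one]
    split_ifs <;> norm_num
  add_mem' {P Q} hP hQ k := by
    rw [coeff_add]
    exact add_nonneg (hP k) (hQ k)
  zero_mem' k := by simp

def SecondDiffNonneg (L : ℝ[X] →ₗ[ℝ] ℝ) : Prop :=
  ∀ P ∈ nonnegCoeffs, 0 ≤ L (P * (X - 1) ^ 2)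

lemma SecondDiffNonneg.comp_mulLeft {L : ℝ[X] →ₗ[ℝ] ℝ} (hL : SecondDiffNonneg L)
    {Q : ℝ[X]} (hQ : Q ∈ nonnegCoeffs) : SecondDiffNonneg (L ∘ₗ LinearMap.mulLeft ℝ Q) := by
  intro P hP
  simpa only [LinearMap.comp_apply, LinearMap.mulLeft_apply, mul_assoc] using
    hL (Q * P) (mul_mem hQ hP)

noncomputable def bernsteinGen (u : ℝ) : ℝ[X] := C (1 - u) + C u * X

local notation "𝔹" => bernsteinGen

lemma bernsteinGen_mem {u : ℝ} (hu : u ∈ Set.Icc (0 : ℝ) 1) : 𝔹 u ∈ nonnegCoeffs := by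
  intro k
  rw [bernsteinGen, coeff_add, coeff_C, coeff_C_mul_X]
  obtain ⟨hu0, hu1⟩ := hu
  split_ifs <;> linarith

lemma SecondDiffNonneg.two_mul_le {L : ℝ[X] →ₗ[ℝ] ℝ} (hL : SecondDiffNonneg L) (a b : ℝ) :
    2 * L (𝔹 a * 𝔹 b) ≤ L (𝔹 a ^ 2) + L (𝔹 b ^ 2) := by
  have hsq : 𝔹 a ^ 2 + 𝔹 b ^ 2 = 2 • (𝔹 a * 𝔹 b) + (a - b) ^ 2 • (1 * (X - 1) ^ 2) := by
    simp only [bernsteinGen, smul_eq_C_mul, nsmul_eq_mul, map_sub, map_pow]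
    ring
  have hL_sq := congrArg L hsq
  rw [map_add, map_add, map_nsmul, map_smul, smul_eq_mul, nsmul_eq_mul, Nat.cast_ofNat] at hL_sq
  linarith [mul_nonneg (sq_nonneg (a - b)) (hL 1 (one_mem _))]

theorem SecondDiffNonneg.mul_pow_le {a b : ℝ} (ha : a ∈ Set.Icc (0 : ℝ) 1)
    (hb : b ∈ Set.Icc (0 : ℝ) 1) :
    ∀ (N : ℕ) {L : ℝ[X] →ₗ[ℝ] ℝ}, SecondDiffNonneg L →
      (N + 1 : ℝ) * L (𝔹 a * 𝔹 b ^ N) ≤ L (𝔹 a ^ (N + 1)) + N * L (𝔹 b ^ (N + 1))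
  | 0, _, _ => by simp
  | 1, L, hL => by
    have h := hL.two_mul_le a b
    norm_num at h ⊢
    linarith
  | N + 2, L, hL => by
    have hp := SecondDiffNonneg.mul_pow_le ha hb (N + 1) (hL.comp_mulLeft (bernsteinGen_mem hb))
    have hq := SecondDiffNonneg.mul_pow_le hb ha (N + 1) (hL.comp_mulLeft (bernsteinGen_mem ha))
    simp only [LinearMap.comp_apply, LinearMap.mulLeft_apply, ← pow_succ', mul_left_comm (𝔹 b),
      mul_left_comm (𝔹 a)] at hp hq
    push_cast at hp hq ⊢
    -- `(N + 2) * hp + hq` is `N + 1` times the goal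
    nlinarith

theorem SecondDiffNonneg.card_mul_le_sum {L : ℝ[X] →ₗ[ℝ] ℝ} (hL : SecondDiffNonneg L)
    {ι : Type*} [DecidableEq ι] (u : ι → ℝ) (hu : ∀ j, u j ∈ Set.Icc (0 : ℝ) 1)
    (s : Finset ι) :
    #s * L (∏ j ∈ s, 𝔹 (u j)) ≤ ∑ j ∈ s, L (𝔹 (u j) ^ #s) := by
  induction s using Finset.induction_on generalizing L with
  | empty => simp
  | insert j s hj ih =>
    rw [card_insert_of_notMem hj, prod_insert hj, sum_insert hj]
    rcases s.eq_empty_or_nonempty with rfl | hs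
    · simp
    have hmerge := ih (hL.comp_mulLeft (bernsteinGen_mem (hu j)))
    simp only [LinearMap.comp_apply, LinearMap.mulLeft_apply] at hmerge
    have hpair : (#s + 1 : ℝ) * ∑ k ∈ s, L (𝔹 (u j) * 𝔹 (u k) ^ #s)
        ≤ #s * (L (𝔹 (u j) ^ (#s + 1)) + ∑ k ∈ s, L (𝔹 (u k) ^ (#s + 1))) :=
      calc (#s + 1 : ℝ) * ∑ k ∈ s, L (𝔹 (u j) * 𝔹 (u k) ^ #s)
          ≤ ∑ k ∈ s, (L (𝔹 (u j) ^ (#s + 1)) + #s * L (𝔹 (u k) ^ (#s + 1))) := by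
            rw [mul_sum]
            exact sum_le_sum fun k _ => hL.mul_pow_le (hu j) (hu k) #s
        _ = _ := by rw [sum_add_distrib, sum_const, nsmul_eq_mul, ← mul_sum, mul_add]
    have hs0 : (0 : ℝ) < #s := by exact_mod_cast hs.card_pos
    push_cast
    -- `(#s + 1) * hmerge` followed by `hpair` is `#s` times the goal
    nlinarith

theorem SecondDiffNonneg.mul_prod_pow_le {L : ℝ[X] →ₗ[ℝ] ℝ} (hL : SecondDiffNonneg L) {m : ℕ}
    (x : Fin m → ℝ) (hx : ∀ ν, x ν ∈ Set.Icc (0 : ℝ) 1) (n : ℕ) :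
    m * L (∏ ν, 𝔹 (x ν) ^ n) ≤ ∑ ν, L (𝔹 (x ν) ^ (m * n)) := by
  rcases Nat.eq_zero_or_pos n with rfl | hn
  · simp
  have h := hL.card_mul_le_sum (fun p : Fin m × Fin n => x p.1) (fun p => hx p.1) univ
  simp only [card_univ, Fintype.card_prod, Fintype.card_fin, Fintype.prod_prod_type, prod_const,
    Fintype.sum_prod_type, sum_const, nsmul_eq_mul, ← mul_sum] at h
  push_cast at h
  exact le_of_mul_le_mul_left (by linarith) (by exact_mod_cast hn : (0 : ℝ) < n)

noncomputable def coeffSum (g : ℕ → ℝ) : ℝ[X] →ₗ[ℝ] ℝ :=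
  lsum fun k => LinearMap.mulRight ℝ (g k)

lemma coeffSum_monomial (g : ℕ → ℝ) (k : ℕ) (a : ℝ) : coeffSum g (monomial k a) = a * g k := by
  rw [coeffSum, lsum_apply, sum_monomial_index _ _ (by simp), LinearMap.mulRight_apply]

lemma coeffSum_mul_X_sub_one_sq (g : ℕ → ℝ) (P : ℝ[X]) :
    coeffSum g (P * (X - 1) ^ 2) = coeffSum (fun k => g (k + 2) - 2 * g (k + 1) + g k) P := by
  induction P using Polynomial.induction_on' with
  | add P Q hP hQ => rw [add_mul, map_add, map_add, hP, hQ]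
  | monomial k a =>
    have hexp : monomial k a * (X - 1) ^ 2
        = monomial (k + 2) a - 2 • monomial (k + 1) a + monomial k a := by
      simp only [← C_mul_X_pow_eq_monomial]
      ring
    rw [hexp, map_add, map_sub, map_nsmul, coeffSum_monomial, coeffSum_monomial,
      coeffSum_monomial, coeffSum_monomial, nsmul_eq_mul]
    push_cast
    ring

lemma coeffSum_nonneg {h : ℕ → ℝ} (hh : ∀ k, 0 ≤ h k) {P : ℝ[X]} (hP : P ∈ nonnegCoeffs) :
    0 ≤ coeffSum h P := by
  rw [coeffSum, lsum_apply]
  exact sum_nonneg fun k _ => mul_nonneg (hP k) (hh k)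

lemma secondDiffNonneg_coeffSum {g : ℕ → ℝ} (hg : ∀ k, 0 ≤ g (k + 2) - 2 * g (k + 1) + g k) :
    SecondDiffNonneg (coeffSum g) := fun P hP => by
  rw [coeffSum_mul_X_sub_one_sq]
  exact coeffSum_nonneg hg hP

lemma bernsteinGen_pow (u : ℝ) (n : ℕ) :
    𝔹 u ^ n = ∑ k ∈ range (n + 1), monomial k (bern n k u) := by
  rw [bernsteinGen, add_comm, add_pow]
  refine sum_congr rfl fun k _ => ?_
  rw [← C_mul_X_pow_eq_monomial, bern]
  simp only [map_mul, map_pow, map_natCast]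
  ring

lemma coeffSum_prod_bernsteinGen_pow (g : ℕ → ℝ) {m : ℕ} (y : Fin m → ℝ) (n : ℕ) :
    coeffSum g (∏ ν, 𝔹 (y ν) ^ n)
      = ∑ i : Fin m → Fin (n + 1), (∏ ν, bern n (i ν) (y ν)) * g (∑ ν, (i ν : ℕ)) := by
  simp_rw [bernsteinGen_pow, ← Fin.sum_univ_eq_sum_range (fun k => monomial k (bern n k _)),
    prod_univ_sum, Fintype.piFinset_univ, map_sum]
  refine sum_congr rfl fun i _ => ?_
  rw [← coeffSum_monomial]
  simp only [← C_mul_X_pow_eq_monomial, prod_mul_distrib, map_prod, prod_pow_eq_pow_sum]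

/-- Continued affinely beyond `N` so that the second differences stay nonnegative on all of `ℕ`:
`SecondDiffNonneg` tests polynomials of every degree. -/
noncomputable def gridExtension (f : ℝ → ℝ) (N k : ℕ) : ℝ :=
  if k ≤ N then f (k / N) else f 1 + (k - N) * (f 1 - f ((N - 1) / N))

lemma gridExtension_of_le_add_one (f : ℝ → ℝ) {N k : ℕ} (hN : 1 ≤ N) (hk : N ≤ k + 1) :
    gridExtension f N k = f 1 + (k - N) * (f 1 - f ((N - 1) / N)) := by
  have hN0 : (N : ℝ) ≠ 0 := by positivity
  unfold gridExtension
  split_ifs with hkN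
  · obtain rfl | rfl : k = N ∨ k + 1 = N := by omega
    · rw [div_self hN0]
      ring
    · rw [show ((k + 1 : ℕ) : ℝ) - 1 = k by push_cast; ring]
      push_cast
      ring
  · rfl

lemma gridExtension_secondDiff_nonneg {f : ℝ → ℝ} (hf : ConvexOn ℝ (Set.Icc 0 1) f) {N : ℕ}
    (hN : 1 ≤ N) (k : ℕ) :
    0 ≤ gridExtension f N (k + 2) - 2 * gridExtension f N (k + 1) + gridExtension f N k := by
  by_cases hk : k + 2 ≤ N
  · have hNpos : (0 : ℝ) < N := by positivity
    have hmem : ∀ j : ℕ, j ≤ N → (j / N : ℝ) ∈ Set.Icc 0 1 := fun j hj =>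
      ⟨by positivity, div_le_one_of_le₀ (by exact_mod_cast hj) hNpos.le⟩
    have hmid := hf.2 (hmem k (by omega)) (hmem (k + 2) hk) (by norm_num : (0 : ℝ) ≤ 1 / 2)
      (by norm_num : (0 : ℝ) ≤ 1 / 2) (by norm_num)
    have hmid_pt : (1 / 2 : ℝ) • (k / N : ℝ) + (1 / 2 : ℝ) • (((k + 2 : ℕ) : ℝ) / N)
        = ((k + 1 : ℕ) : ℝ) / N := by
      push_cast
      simp only [smul_eq_mul]
      ring
    rw [hmid_pt, smul_eq_mul, smul_eq_mul] at hmid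
    simp only [gridExtension, if_pos hk, if_pos (by omega : k + 1 ≤ N), if_pos (by omega : k ≤ N)]
    linarith
  · rw [gridExtension_of_le_add_one f hN (by omega), gridExtension_of_le_add_one f hN (by omega),
      gridExtension_of_le_add_one f hN (by omega)]
    push_cast
    exact le_of_eq (by ring)

theorem stmt1_general (m n : ℕ) (x : Fin m → ℝ) (hx : ∀ ν, x ν ∈ Set.Icc (0:ℝ) 1)
    (f : ℝ → ℝ) (hf : ConvexOn ℝ (Set.Icc 0 1) f) :
    0 ≤ ∑ i : Fin m → Fin (n+1),
      ((∑ k : Fin m, ∏ ν : Fin m, bern n (i ν) (x k))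
          - (m : ℝ) * ∏ ν : Fin m, bern n (i ν) (x ν))
        * f (((∑ ν : Fin m, (i ν : ℕ) : ℕ) : ℝ) / (m * n)) := by
  rcases Nat.eq_zero_or_pos (m * n) with hmn | hmn
  · obtain rfl | rfl := Nat.mul_eq_zero.mp hmn <;> simp [bern]
  set g := gridExtension f (m * n)
  have hfg : ∀ i : Fin m → Fin (n + 1),
      f (((∑ ν, (i ν : ℕ) : ℕ) : ℝ) / (m * n)) = g (∑ ν, (i ν : ℕ)) := by
    intro i
    have hle : ∑ ν, (i ν : ℕ) ≤ m * n := by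
      simpa using sum_le_sum fun ν (_ : ν ∈ univ) => Nat.lt_succ_iff.mp (i ν).isLt
    simp only [g, gridExtension, if_pos hle, Nat.cast_mul]
  have hpow : ∀ k, 𝔹 (x k) ^ (m * n) = ∏ _ν : Fin m, 𝔹 (x k) ^ n := fun k => by
    rw [prod_const, card_univ, Fintype.card_fin, pow_mul']
  have hsum : ∑ i : Fin m → Fin (n + 1),
      ((∑ k, ∏ ν, bern n (i ν) (x k)) - m * ∏ ν, bern n (i ν) (x ν)) * g (∑ ν, (i ν : ℕ))
      = ∑ k, coeffSum g (𝔹 (x k) ^ (m * n)) - m * coeffSum g (∏ ν, 𝔹 (x ν) ^ n) := by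
    simp only [hpow, coeffSum_prod_bernsteinGen_pow, sub_mul, sum_mul, mul_assoc, sum_sub_distrib,
      ← mul_sum]
    rw [sum_comm]
  simp only [hfg]
  rw [hsum, sub_nonneg]
  exact (secondDiffNonneg_coeffSum (gridExtension_secondDiff_nonneg hf hmn)).mul_prod_pow_le x hx n

theorem stmt1 (m n : ℕ) (hm : 2 ≤ m) (x : Fin m → ℝ) (hx : ∀ ν, x ν ∈ Set.Icc (0:ℝ) 1)
    (f : ℝ → ℝ) (hf : ConvexOn ℝ (Set.Icc 0 1) f) (hfc : ContinuousOn f (Set.Icc 0 1)) :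
    0 ≤ ∑ i : Fin m → Fin (n+1),
      ((∑ k : Fin m, ∏ ν : Fin m, bern n (i ν) (x k))
          - (m : ℝ) * ∏ ν : Fin m, bern n (i ν) (x ν))
        * f (((∑ ν : Fin m, (i ν : ℕ) : ℕ) : ℝ) / (m * n)) :=
  stmt1_general m n x hx f hf
end

section
/- Let n, m ∈ ℕ and let f : [0,1] → ℝ be convex and continuous. Then B_{mn}(f)((x₁+⋯+x_m)/m) ≥ ∑_{i₁=0}^n ⋯ ∑_{i_m=0}^n (∏_{ν=1}^m b_{n,i_ν}(x_ν)) · f((i₁+⋯+i_m)/(mn)) for all x₁,…,x_m ∈ [0,1]. -/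
/-- Classical Bernstein operator of degree `N`. -/
noncomputable def bernOp (N : ℕ) (f : ℝ → ℝ) (x : ℝ) : ℝ :=
  ∑ k ∈ Finset.range (N+1), bern N k x * f ((k : ℝ) / N)

/-!
Read probabilistically, the left-hand side is `E f(S / mn)` where `S` is a sum of `mn` independent
Bernoulli variables, `n` of them with parameter `x_ν` for each `ν`, and the right-hand side is the
same expectation when all `mn` parameters are replaced by their mean `c`. Writing
`g k = f (k / mn)`, the expectation of `g S` depends on two of the parameters `p, q` only through
`p + q` and `p q`, and the coefficient of `p q` is the expectation of a second difference of `g`,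
which is nonnegative by convexity. Replacing a pair `a < c < b` of parameters by `c, a + b - c`
keeps the sum and increases the product, hence the expectation; each such move fixes one more
parameter at `c`.
-/

open Finset
open scoped fwdDiff

/-- `pbExpect [p₁, …, p_N] g` is the expectation of `g (X₁ + ⋯ + X_N)` for independent
`Xᵢ ~ Bernoulli(pᵢ)`, computed by conditioning on `X₁`. -/
noncomputable def pbExpect : List ℝ → (ℕ → ℝ) → ℝ
  | [], g => g 0
  | p :: ps, g => (1 - p) * pbExpect ps g + p * pbExpect ps (fun k => g (k + 1))

lemma pbExpect_nonneg {ps : List ℝ} (hps : ∀ p ∈ ps, p ∈ Set.Icc (0 : ℝ) 1) {g : ℕ → ℝ}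
    (hg : ∀ k ≤ ps.length, 0 ≤ g k) : 0 ≤ pbExpect ps g := by
  induction ps generalizing g with
  | nil => exact hg 0 le_rfl
  | cons p ps ih =>
    obtain ⟨hp0, hp1⟩ := hps p List.mem_cons_self
    have hps' : ∀ q ∈ ps, q ∈ Set.Icc (0 : ℝ) 1 := fun q hq => hps q (List.mem_cons_of_mem p hq)
    have h₀ := ih hps' fun k hk => hg k (hk.trans (Nat.le_succ _))
    have h₁ := ih hps' (g := fun k => g (k + 1)) fun k hk => hg (k + 1) (Nat.succ_le_succ hk)
    rw [pbExpect]
    exact add_nonneg (mul_nonneg (by linarith) h₀) (mul_nonneg hp0 h₁)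

lemma pbExpect_sub (ps : List ℝ) (g h : ℕ → ℝ) :
    pbExpect ps (fun k => g k - h k) = pbExpect ps g - pbExpect ps h := by
  induction ps generalizing g h with
  | nil => rfl
  | cons p ps ih =>
    simp only [pbExpect, ih]
    ring

lemma pbExpect_fwdDiff (ps : List ℝ) (g : ℕ → ℝ) :
    pbExpect ps (Δ_[1] g) = pbExpect ps (fun k => g (k + 1)) - pbExpect ps g :=
  pbExpect_sub ps _ g

lemma pbExpect_cons_cons (p q : ℝ) (ps : List ℝ) (g : ℕ → ℝ) :
    pbExpect (p :: q :: ps) g = pbExpect ps g + (p + q) * pbExpect ps (Δ_[1] g)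
      + p * q * pbExpect ps (Δ_[1] (Δ_[1] g)) := by
  have hshift : (fun k => Δ_[1] g (k + 1)) = Δ_[1] (fun k => g (k + 1)) := rfl
  simp only [pbExpect, pbExpect_fwdDiff ps (Δ_[1] g), hshift, pbExpect_fwdDiff]
  ring

lemma pbExpect_perm {ps qs : List ℝ} (h : ps.Perm qs) (g : ℕ → ℝ) :
    pbExpect ps g = pbExpect qs g := by
  induction h generalizing g with
  | nil => rfl
  | cons p _ ih => simp only [pbExpect, ih]
  | swap p q ps => simp only [pbExpect]; ring
  | trans _ _ ih₁ ih₂ => rw [ih₁, ih₂]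

lemma pbExpect_append (ps qs : List ℝ) (g : ℕ → ℝ) :
    pbExpect (ps ++ qs) g = pbExpect ps (fun a => pbExpect qs (fun b => g (a + b))) := by
  induction ps generalizing g with
  | nil => simp [pbExpect]
  | cons p ps ih => simp only [List.cons_append, pbExpect, ih, Nat.add_right_comm]

lemma pbExpect_le_of_pair_move {p q p' q' : ℝ} (hsum : p + q = p' + q') (hprod : p * q ≤ p' * q')
    {ps : List ℝ} (hps : ∀ r ∈ ps, r ∈ Set.Icc (0 : ℝ) 1) {g : ℕ → ℝ}
    (hg : ∀ k ≤ ps.length, 0 ≤ Δ_[1] (Δ_[1] g) k) :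
    pbExpect (p :: q :: ps) g ≤ pbExpect (p' :: q' :: ps) g := by
  rw [pbExpect_cons_cons, pbExpect_cons_cons, hsum]
  gcongr
  exact pbExpect_nonneg hps hg

lemma exists_lt_and_exists_gt_of_sum_eq {α : Type*} [AddCommMonoid α] [LinearOrder α]
    [IsOrderedCancelAddMonoid α] {l : List α} {c : α} (hsum : l.sum = l.length • c)
    {e : α} (he : e ∈ l) (hec : e ≠ c) : (∃ a ∈ l, a < c) ∧ ∃ b ∈ l, c < b := by
  constructor
  · by_contra! h
    have := List.sum_lt_sum (fun _ => c) id h ⟨e, he, lt_of_le_of_ne (h e he) hec.symm⟩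
    simp [hsum] at this
  · by_contra! h
    have := List.sum_lt_sum id (fun _ => c) h ⟨e, he, lt_of_le_of_ne (h e he) hec⟩
    simp [hsum] at this

lemma exists_perm_cons_cons {α : Type*} [DecidableEq α] {l : List α} {a b : α} (ha : a ∈ l)
    (hb : b ∈ l) (hab : a ≠ b) : ∃ rest, l.Perm (a :: b :: rest) :=
  ⟨(l.erase a).erase b,
    (List.perm_cons_erase ha).trans
      ((List.perm_cons_erase ((List.mem_erase_of_ne hab.symm).2 hb)).cons a)⟩

lemma pbExpect_le_pbExpect_replicate (N : ℕ) {ps : List ℝ} (hlen : ps.length = N)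
    (hps : ∀ p ∈ ps, p ∈ Set.Icc (0 : ℝ) 1) {c : ℝ} (hsum : ps.sum = N * c) {g : ℕ → ℝ}
    (hg : ∀ k, k + 2 ≤ N → 0 ≤ Δ_[1] (Δ_[1] g) k) :
    pbExpect ps g ≤ pbExpect (List.replicate N c) g := by
  induction N generalizing ps g with
  | zero => rw [List.length_eq_zero_iff.1 hlen]; rfl
  | succ N ih =>
    by_cases hall : ∀ p ∈ ps, p = c
    · rw [← hlen, ← List.eq_replicate_of_mem hall]
    push Not at hall
    obtain ⟨e, he, hec⟩ := hall
    obtain ⟨⟨a, ha, hac⟩, b, hb, hcb⟩ :=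
      exists_lt_and_exists_gt_of_sum_eq (by rw [hsum, hlen, nsmul_eq_mul]) he hec
    obtain ⟨rest, hperm⟩ := exists_perm_cons_cons ha hb (hac.trans hcb).ne
    have hrest : ∀ p ∈ rest, p ∈ Set.Icc (0 : ℝ) 1 := fun p hp =>
      hps p (hperm.mem_iff.2 (List.mem_cons_of_mem _ (List.mem_cons_of_mem _ hp)))
    obtain ⟨ha0, -⟩ := hps a ha
    obtain ⟨-, hb1⟩ := hps b hb
    set qs := (a + b - c) :: rest
    have hrest_len : rest.length + 1 = N := by
      have := hperm.length_eq
      simp only [List.length_cons] at this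
      omega
    have hlen' : qs.length = N := hrest_len
    have hqs : ∀ p ∈ qs, p ∈ Set.Icc (0 : ℝ) 1 := by
      refine List.forall_mem_cons.2 ⟨⟨?_, ?_⟩, hrest⟩ <;> linarith
    have hsum' : qs.sum = N * c := by
      have := hperm.sum_eq
      simp only [List.sum_cons, qs] at this ⊢
      push_cast at hsum
      linarith
    calc pbExpect ps g = pbExpect (a :: b :: rest) g := pbExpect_perm hperm g
      _ ≤ pbExpect (c :: qs) g :=
          pbExpect_le_of_pair_move (by ring)
            (by nlinarith [mul_pos (sub_pos.2 hac) (sub_pos.2 hcb)]) hrest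
            fun k hk => hg k (by omega)
      _ = (1 - c) * pbExpect qs g + c * pbExpect qs (fun k => g (k + 1)) := rfl
      _ ≤ (1 - c) * pbExpect (List.replicate N c) g
            + c * pbExpect (List.replicate N c) (fun k => g (k + 1)) := by
          gcongr ?_ * ?_ + ?_ * ?_
          · linarith
          · exact ih hlen' hqs hsum' fun k hk => hg k (by omega)
          · linarith
          · exact ih hlen' hqs hsum' fun k hk => hg (k + 1) (by omega)
      _ = pbExpect (List.replicate (N + 1) c) g := rfl

lemma bern_eq_zero_of_lt {n k : ℕ} (h : n < k) (x : ℝ) : bern n k x = 0 := by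
  simp [bern, Nat.choose_eq_zero_of_lt h]

lemma bern_succ_succ (n k : ℕ) (x : ℝ) :
    bern (n + 1) (k + 1) x = (1 - x) * bern n (k + 1) x + x * bern n k x := by
  rcases lt_or_ge n k with h | h
  · rw [bern_eq_zero_of_lt h, bern_eq_zero_of_lt (by omega), bern_eq_zero_of_lt (by omega)]
    ring
  obtain ⟨j, rfl⟩ := Nat.exists_eq_add_of_le h
  cases j with
  | zero =>
    rw [add_zero, bern_eq_zero_of_lt (Nat.lt_succ_self k)]
    simp only [bern, Nat.choose_self, Nat.sub_self, Nat.cast_one, pow_zero, one_mul, mul_one]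
    ring
  | succ j =>
    simp only [bern, Nat.choose_succ_succ', show k + (j + 1) + 1 - (k + 1) = j + 1 by omega,
      show k + (j + 1) - (k + 1) = j by omega, show k + (j + 1) - k = j + 1 by omega]
    push_cast
    ring

lemma sum_bern_mul_succ (n : ℕ) (x : ℝ) (g : ℕ → ℝ) :
    ∑ k ∈ range (n + 2), bern (n + 1) k x * g k
      = (1 - x) * ∑ k ∈ range (n + 1), bern n k x * g k
        + x * ∑ k ∈ range (n + 1), bern n k x * g (k + 1) := by
  have hlast : ∑ k ∈ range (n + 1), bern n k x * g k
      = ∑ k ∈ range (n + 2), bern n k x * g k := by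
    rw [sum_range_succ _ (n + 1), bern_eq_zero_of_lt (Nat.lt_succ_self n), zero_mul, add_zero]
  rw [hlast, sum_range_succ', sum_range_succ' _ (n + 1), mul_add, mul_sum, mul_sum,
    add_right_comm, ← sum_add_distrib]
  congr 1
  · exact sum_congr rfl fun k _ => by rw [bern_succ_succ]; ring
  · simp only [bern, Nat.choose_zero_right, Nat.cast_one, pow_zero, one_mul, Nat.sub_zero]
    ring

lemma pbExpect_replicate (n : ℕ) (x : ℝ) (g : ℕ → ℝ) :
    pbExpect (List.replicate n x) g = ∑ k ∈ range (n + 1), bern n k x * g k := by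
  induction n generalizing g with
  | zero => simp [pbExpect, bern]
  | succ n ih => rw [List.replicate_succ, pbExpect, ih, ih, sum_bern_mul_succ]

lemma sum_prod_bern_eq_pbExpect (n m : ℕ) (x : Fin m → ℝ) (g : ℕ → ℝ) :
    ∑ i : Fin m → Fin (n + 1), (∏ ν, bern n (i ν) (x ν)) * g (∑ ν, (i ν : ℕ))
      = pbExpect (List.ofFn fun ν => List.replicate n (x ν)).flatten g := by
  induction m generalizing g with
  | zero => simp [pbExpect]
  | succ m ih =>
    rw [List.ofFn_succ, List.flatten_cons, pbExpect_append, pbExpect_replicate,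
      ← (Fin.consEquiv fun _ => Fin (n + 1)).sum_comp, Fintype.sum_prod_type,
      ← Fin.sum_univ_eq_sum_range (fun k => bern n k (x 0) * _)]
    refine sum_congr rfl fun a _ => ?_
    rw [← ih, mul_sum]
    refine sum_congr rfl fun i _ => ?_
    simp only [Fin.consEquiv_apply, Fin.prod_univ_succ, Fin.sum_univ_succ, Fin.cons_zero,
      Fin.cons_succ]
    ring

lemma ConvexOn.fwdDiff_fwdDiff_nonneg {s : Set ℝ} {f : ℝ → ℝ} (hf : ConvexOn ℝ s f) (d : ℝ)
    {k : ℕ} (hk : (k : ℝ) / d ∈ s) (hk₂ : ((k : ℝ) + 2) / d ∈ s) :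
    0 ≤ Δ_[1] (Δ_[1] fun j : ℕ => f (j / d)) k := by
  have hmid := hf.2 hk hk₂ (by norm_num : (0 : ℝ) ≤ 1 / 2) (by norm_num : (0 : ℝ) ≤ 1 / 2)
    (by norm_num)
  have hsum : (1 / 2 : ℝ) • ((k : ℝ) / d) + (1 / 2 : ℝ) • (((k : ℝ) + 2) / d)
      = ((k : ℝ) + 1) / d := by
    simp only [smul_eq_mul]
    ring
  rw [hsum, smul_eq_mul, smul_eq_mul] at hmid
  simp only [fwdDiff]
  push_cast
  rw [add_assoc, one_add_one_eq_two]
  linarith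

theorem stmt2_general (n m : ℕ) (f : ℝ → ℝ) (hf : ConvexOn ℝ (Set.Icc 0 1) f)
    (x : Fin m → ℝ) (hx : ∀ ν, x ν ∈ Set.Icc (0:ℝ) 1) :
    ∑ i : Fin m → Fin (n+1),
      (∏ ν : Fin m, bern n (i ν) (x ν)) * f (((∑ ν : Fin m, (i ν : ℕ) : ℕ) : ℝ) / (m * n))
      ≤ bernOp (m * n) f ((∑ ν : Fin m, x ν) / m) := by
  set ps := (List.ofFn fun ν => List.replicate n (x ν)).flatten
  have hlen : ps.length = m * n := by
    simp [ps, List.length_flatten, Function.comp_def, mul_comm]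
  have hps : ∀ p ∈ ps, p ∈ Set.Icc (0 : ℝ) 1 := by
    simp only [ps, List.mem_flatten, List.mem_ofFn]
    rintro p ⟨_, ⟨ν, rfl⟩, hp⟩
    rw [List.eq_of_mem_replicate hp]
    exact hx ν
  have hsum : ps.sum = (m * n : ℕ) * ((∑ ν, x ν) / m) := by
    rcases eq_or_ne m 0 with rfl | hm
    · simp [ps]
    · simp only [ps, List.sum_flatten, List.map_ofFn, Function.comp_def, List.sum_replicate,
        nsmul_eq_mul, List.sum_ofFn, ← mul_sum, Nat.cast_mul]
      field_simp
  have hgrid : ∀ j ≤ m * n, (j : ℝ) / (m * n : ℕ) ∈ Set.Icc (0 : ℝ) 1 := fun j hj =>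
    ⟨by positivity, div_le_one_of_le₀ (by exact_mod_cast hj) (by positivity)⟩
  have key := pbExpect_le_pbExpect_replicate (m * n) hlen hps hsum fun k hk =>
    hf.fwdDiff_fwdDiff_nonneg _ (hgrid k (by omega)) (by exact_mod_cast hgrid (k + 2) hk)
  rw [← sum_prod_bern_eq_pbExpect, pbExpect_replicate] at key
  rw [bernOp]
  exact_mod_cast key

theorem stmt2 (n m : ℕ) (f : ℝ → ℝ) (hf : ConvexOn ℝ (Set.Icc 0 1) f)
    (hfc : ContinuousOn f (Set.Icc 0 1)) (x : Fin m → ℝ) (hx : ∀ ν, x ν ∈ Set.Icc (0:ℝ) 1) :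
    ∑ i : Fin m → Fin (n+1),
      (∏ ν : Fin m, bern n (i ν) (x ν)) * f (((∑ ν : Fin m, (i ν : ℕ) : ℕ) : ℝ) / (m * n))
      ≤ bernOp (m * n) f ((∑ ν : Fin m, x ν) / m) :=
  stmt2_general n m f hf x hx
end

section
/- For n ∈ ℕ and all x, y ∈ [0,1], the Bernstein operator satisfies B_{2n}(f)((x+y)/2) ≥ ∑_{i=0}^n ∑_{j=0}^n b_{n,i}(x) b_{n,j}(y) f((i+j)/(2n)) for every convex continuous f : [0,1] → ℝ. -/
namespace Stmt3Aux

lemma bern_nonneg {n k : ℕ} {x : ℝ} (hx : x ∈ Set.Icc (0:ℝ) 1) : 0 ≤ bern n k x := by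
  obtain ⟨h0, h1⟩ := hx
  have h2 : (0:ℝ) ≤ 1 - x := by linarith
  unfold bern
  positivity

lemma bern_succ (N k : ℕ) (t : ℝ) :
    bern (N+1) (k+1) t = (1-t) * bern N (k+1) t + t * bern N k t := by
  unfold bern
  rcases Nat.lt_trichotomy k N with h | h | h
  · have h1 : N + 1 - (k+1) = (N - (k+1)) + 1 := by omega
    have h2 : N - k = (N - (k+1)) + 1 := by omega
    rw [Nat.choose_succ_succ N k, h1, h2]
    push_cast
    ring
  · subst h
    simp [Nat.choose_self, Nat.choose_succ_self, Nat.sub_self]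
    ring
  · have c1 : (N+1).choose (k+1) = 0 := Nat.choose_eq_zero_of_lt (by omega)
    have c2 : N.choose (k+1) = 0 := Nat.choose_eq_zero_of_lt (by omega)
    have c3 : N.choose k = 0 := Nat.choose_eq_zero_of_lt h
    rw [c1, c2, c3]
    push_cast
    ring

lemma bern_top (N : ℕ) (t : ℝ) : bern N (N+1) t = 0 := by
  simp [bern, Nat.choose_succ_self]

lemma sum_bern_succ (N : ℕ) (t : ℝ) (h : ℕ → ℝ) :
    ∑ k ∈ Finset.range (N+1+1), bern (N+1) k t * h k
      = (1-t) * ∑ k ∈ Finset.range (N+1), bern N k t * h k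
        + t * ∑ k ∈ Finset.range (N+1), bern N k t * h (k+1) := by
  rw [Finset.sum_range_succ' (fun k => bern (N+1) k t * h k) (N+1)]
  have h0 : bern (N+1) 0 t * h 0 = (1-t) * (bern N 0 t * h 0) := by
    simp [bern, pow_succ]; ring
  have hsplit : ∀ k ∈ Finset.range (N+1), bern (N+1) (k+1) t * h (k+1)
      = (1-t) * (bern N (k+1) t * h (k+1)) + t * (bern N k t * h (k+1)) := by
    intro k _; rw [bern_succ]; ring
  rw [Finset.sum_congr rfl hsplit, Finset.sum_add_distrib, ← Finset.mul_sum, ← Finset.mul_sum, h0]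
  rw [Finset.sum_range_succ (fun k => bern N (k+1) t * h (k+1)) N, bern_top]
  rw [Finset.sum_range_succ' (fun k => bern N k t * h k) N]
  ring



noncomputable def sumB (N : ℕ) (t : ℝ) (h : ℕ → ℝ) : ℝ :=
  ∑ k ∈ Finset.range (N+1), bern N k t * h k

lemma sumB_congr {N : ℕ} {t : ℝ} {h1 h2 : ℕ → ℝ} (e : ∀ k, h1 k = h2 k) :
    sumB N t h1 = sumB N t h2 := by
  unfold sumB
  exact Finset.sum_congr rfl fun k _ => by rw [e]

lemma sumB_nonneg {N : ℕ} {t : ℝ} (ht : t ∈ Set.Icc (0:ℝ) 1) {h : ℕ → ℝ}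
    (hh : ∀ k ≤ N, 0 ≤ h k) : 0 ≤ sumB N t h := by
  apply Finset.sum_nonneg
  intro k hk
  exact mul_nonneg (bern_nonneg ht) (hh k (by have := Finset.mem_range.mp hk; omega))

lemma sumB_succ (N : ℕ) (t : ℝ) (h : ℕ → ℝ) :
    sumB (N+1) t h = (1-t) * sumB N t h + t * sumB N t (fun k => h (k+1)) := by
  unfold sumB
  exact sum_bern_succ N t h

lemma sumB_succ2 (N : ℕ) (t : ℝ) (h : ℕ → ℝ) :
    sumB (N+1+1) t h = (1-t)^2 * sumB N t h + 2*t*(1-t) * sumB N t (fun k => h (k+1))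
      + t^2 * sumB N t (fun k => h (k+1+1)) := by
  simp only [sumB_succ]
  ring

lemma sum_comb2 {s : Finset ℕ} {α β : ℝ} {F G1 G2 : ℕ → ℝ}
    (h : ∀ i ∈ s, F i = α * G1 i + β * G2 i) :
    ∑ i ∈ s, F i = α * ∑ i ∈ s, G1 i + β * ∑ i ∈ s, G2 i := by
  rw [Finset.mul_sum, Finset.mul_sum, ← Finset.sum_add_distrib]
  exact Finset.sum_congr rfl h

lemma sum_comb3 {s : Finset ℕ} {α β γ : ℝ} {F G1 G2 G3 : ℕ → ℝ}
    (h : ∀ i ∈ s, F i = α * G1 i + β * G2 i + γ * G3 i) :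
    ∑ i ∈ s, F i = α * ∑ i ∈ s, G1 i + β * ∑ i ∈ s, G2 i + γ * ∑ i ∈ s, G3 i := by
  rw [Finset.mul_sum, Finset.mul_sum, Finset.mul_sum, ← Finset.sum_add_distrib,
    ← Finset.sum_add_distrib]
  exact Finset.sum_congr rfl h

noncomputable def dsum (x y : ℝ) (a : ℕ) (S : ℕ → ℝ) : ℝ :=
  ∑ i ∈ Finset.range (a+1), ∑ j ∈ Finset.range (a+1), bern a i x * bern a j y * S (i+j)

lemma dsum_congr {x y : ℝ} {a : ℕ} {S1 S2 : ℕ → ℝ} (h : ∀ s, S1 s = S2 s) :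
    dsum x y a S1 = dsum x y a S2 := by
  unfold dsum
  exact Finset.sum_congr rfl fun i _ => Finset.sum_congr rfl fun j _ => by rw [h]

lemma dsum_nonneg {x y : ℝ} (hx : x ∈ Set.Icc (0:ℝ) 1) (hy : y ∈ Set.Icc (0:ℝ) 1)
    {a : ℕ} {S : ℕ → ℝ} (hS : ∀ s ≤ a + a, 0 ≤ S s) : 0 ≤ dsum x y a S := by
  unfold dsum
  apply Finset.sum_nonneg
  intro i hi
  apply Finset.sum_nonneg
  intro j hj
  have hi' := Finset.mem_range.mp hi
  have hj' := Finset.mem_range.mp hj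
  exact mul_nonneg (mul_nonneg (bern_nonneg hx) (bern_nonneg hy)) (hS _ (by omega))

lemma dsum_comb3 (x y : ℝ) (a : ℕ) (α β γ : ℝ) (S : ℕ → ℝ) :
    dsum x y a (fun s => α * S s + β * S (s+1) + γ * S (s+2))
      = α * dsum x y a S + β * dsum x y a (fun s => S (s+1)) + γ * dsum x y a (fun s => S (s+2)) := by
  simp only [dsum]
  apply sum_comb3
  intro i _
  apply sum_comb3
  intro j _
  ring



lemma dsum_succ (x y : ℝ) (a : ℕ) (S : ℕ → ℝ) :
    dsum x y (a+1) S
      = (1-x)*(1-y) * dsum x y a S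
        + ((1-x)*y + x*(1-y)) * dsum x y a (fun s => S (s+1))
        + x*y * dsum x y a (fun s => S (s+2)) := by
  have inner : ∀ i : ℕ,
      (∑ j ∈ Finset.range (a+1+1), bern (a+1) i x * bern (a+1) j y * S (i+j))
        = bern (a+1) i x * ((1-y) * (∑ j ∈ Finset.range (a+1), bern a j y * S (i+j))
            + y * (∑ j ∈ Finset.range (a+1), bern a j y * S (i+(j+1)))) := by
    intro i
    have e := sum_bern_succ a y (fun j => S (i+j))
    calc (∑ j ∈ Finset.range (a+1+1), bern (a+1) i x * bern (a+1) j y * S (i+j))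
        = bern (a+1) i x * (∑ j ∈ Finset.range (a+1+1), bern (a+1) j y * S (i+j)) := by
          rw [Finset.mul_sum]; exact Finset.sum_congr rfl fun j _ => by ring
      _ = bern (a+1) i x * ((1-y) * (∑ j ∈ Finset.range (a+1), bern a j y * S (i+j))
            + y * (∑ j ∈ Finset.range (a+1), bern a j y * S (i+(j+1)))) :=
          congrArg (fun z => bern (a+1) i x * z) e
  have e2 := sum_bern_succ a x (fun i => (1-y) * (∑ j ∈ Finset.range (a+1), bern a j y * S (i+j))
      + y * (∑ j ∈ Finset.range (a+1), bern a j y * S (i+(j+1))))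
  have pack : ∀ (U : ℕ → ℕ → ℕ),
      (∑ i ∈ Finset.range (a+1), bern a i x *
        ((1-y) * (∑ j ∈ Finset.range (a+1), bern a j y * S (U i j))
          + y * (∑ j ∈ Finset.range (a+1), bern a j y * S (U i (j+1)))))
      = (1-y) * (∑ i ∈ Finset.range (a+1), ∑ j ∈ Finset.range (a+1),
            bern a i x * bern a j y * S (U i j))
        + y * (∑ i ∈ Finset.range (a+1), ∑ j ∈ Finset.range (a+1),
            bern a i x * bern a j y * S (U i (j+1))) := by
    intro U
    apply sum_comb2
    intro i _
    rw [show (∑ j ∈ Finset.range (a+1), bern a i x * bern a j y * S (U i j))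
          = bern a i x * ∑ j ∈ Finset.range (a+1), bern a j y * S (U i j) from by
        rw [Finset.mul_sum]; exact Finset.sum_congr rfl fun j _ => by ring,
      show (∑ j ∈ Finset.range (a+1), bern a i x * bern a j y * S (U i (j+1)))
          = bern a i x * ∑ j ∈ Finset.range (a+1), bern a j y * S (U i (j+1)) from by
        rw [Finset.mul_sum]; exact Finset.sum_congr rfl fun j _ => by ring]
    ring
  have p1 : (∑ i ∈ Finset.range (a+1), bern a i x *
        ((1-y) * (∑ j ∈ Finset.range (a+1), bern a j y * S (i+j))
          + y * (∑ j ∈ Finset.range (a+1), bern a j y * S (i+(j+1)))))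
      = (1-y) * (∑ i ∈ Finset.range (a+1), ∑ j ∈ Finset.range (a+1),
            bern a i x * bern a j y * S (i+j))
        + y * (∑ i ∈ Finset.range (a+1), ∑ j ∈ Finset.range (a+1),
            bern a i x * bern a j y * S (i+(j+1))) := pack (fun i j => i + j)
  have p2 : (∑ i ∈ Finset.range (a+1), bern a i x *
        ((1-y) * (∑ j ∈ Finset.range (a+1), bern a j y * S ((i+1)+j))
          + y * (∑ j ∈ Finset.range (a+1), bern a j y * S ((i+1)+(j+1)))))
      = (1-y) * (∑ i ∈ Finset.range (a+1), ∑ j ∈ Finset.range (a+1),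
            bern a i x * bern a j y * S ((i+1)+j))
        + y * (∑ i ∈ Finset.range (a+1), ∑ j ∈ Finset.range (a+1),
            bern a i x * bern a j y * S ((i+1)+(j+1))) := pack (fun i j => (i+1) + j)
  have fix1 : (∑ i ∈ Finset.range (a+1), ∑ j ∈ Finset.range (a+1),
        bern a i x * bern a j y * S (i+(j+1)))
      = ∑ i ∈ Finset.range (a+1), ∑ j ∈ Finset.range (a+1),
        bern a i x * bern a j y * S (i+j+1) :=
    Finset.sum_congr rfl fun i _ => Finset.sum_congr rfl fun j _ => by
      rw [show i+(j+1) = i+j+1 from by omega]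
  have fix2 : (∑ i ∈ Finset.range (a+1), ∑ j ∈ Finset.range (a+1),
        bern a i x * bern a j y * S ((i+1)+j))
      = ∑ i ∈ Finset.range (a+1), ∑ j ∈ Finset.range (a+1),
        bern a i x * bern a j y * S (i+j+1) :=
    Finset.sum_congr rfl fun i _ => Finset.sum_congr rfl fun j _ => by
      rw [show (i+1)+j = i+j+1 from by omega]
  have fix3 : (∑ i ∈ Finset.range (a+1), ∑ j ∈ Finset.range (a+1),
        bern a i x * bern a j y * S ((i+1)+(j+1)))
      = ∑ i ∈ Finset.range (a+1), ∑ j ∈ Finset.range (a+1),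
        bern a i x * bern a j y * S (i+j+2) :=
    Finset.sum_congr rfl fun i _ => Finset.sum_congr rfl fun j _ => by
      rw [show (i+1)+(j+1) = i+j+2 from by omega]
  calc dsum x y (a+1) S
      = ∑ i ∈ Finset.range (a+1+1), bern (a+1) i x *
          ((1-y) * (∑ j ∈ Finset.range (a+1), bern a j y * S (i+j))
            + y * (∑ j ∈ Finset.range (a+1), bern a j y * S (i+(j+1)))) :=
        Finset.sum_congr rfl fun i _ => inner i
    _ = (1-x) * (∑ i ∈ Finset.range (a+1), bern a i x *
          ((1-y) * (∑ j ∈ Finset.range (a+1), bern a j y * S (i+j))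
            + y * (∑ j ∈ Finset.range (a+1), bern a j y * S (i+(j+1)))))
        + x * (∑ i ∈ Finset.range (a+1), bern a i x *
          ((1-y) * (∑ j ∈ Finset.range (a+1), bern a j y * S ((i+1)+j))
            + y * (∑ j ∈ Finset.range (a+1), bern a j y * S ((i+1)+(j+1))))) := e2
    _ = (1-x)*(1-y) * dsum x y a S
        + ((1-x)*y + x*(1-y)) * dsum x y a (fun s => S (s+1))
        + x*y * dsum x y a (fun s => S (s+2)) := by
      rw [p1, p2, fix1, fix2, fix3]
      simp only [dsum]
      ring



lemma key {x y : ℝ} (hx : x ∈ Set.Icc (0:ℝ) 1) (hy : y ∈ Set.Icc (0:ℝ) 1) (a : ℕ)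
    (S S' : ℕ → ℝ)
    (hS' : ∀ s, S' s = (1-(x+y)/2)^2 * S s + 2*((x+y)/2)*(1-(x+y)/2) * S (s+1)
        + ((x+y)/2)^2 * S (s+2))
    (hconv : ∀ s, s ≤ a + a → 2 * S (s+1) ≤ S s + S (s+2)) :
    dsum x y (a+1) S ≤ dsum x y a S' := by
  have hR : dsum x y a S'
      = (1-(x+y)/2)^2 * dsum x y a S + 2*((x+y)/2)*(1-(x+y)/2) * dsum x y a (fun s => S (s+1))
        + ((x+y)/2)^2 * dsum x y a (fun s => S (s+2)) := by
    rw [dsum_congr hS']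
    exact dsum_comb3 x y a _ _ _ S
  have hQ : 0 ≤ dsum x y a S - 2 * dsum x y a (fun s => S (s+1)) + dsum x y a (fun s => S (s+2)) := by
    have e1 : dsum x y a (fun s => S s - 2 * S (s+1) + S (s+2))
        = dsum x y a (fun s => 1 * S s + (-2) * S (s+1) + 1 * S (s+2)) :=
      dsum_congr (fun s => by ring)
    have e2 := dsum_comb3 x y a 1 (-2) 1 S
    have e3 : 0 ≤ dsum x y a (fun s => S s - 2 * S (s+1) + S (s+2)) :=
      dsum_nonneg hx hy (fun s hs => by have := hconv s hs; linarith)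
    rw [e1, e2] at e3
    linarith
  rw [dsum_succ, hR]
  nlinarith [hQ, mul_nonneg (sq_nonneg ((x-y)/2)) hQ]

end Stmt3Aux

open Stmt3Aux in
theorem stmt3 (n : ℕ) (x y : ℝ) (hx : x ∈ Set.Icc (0:ℝ) 1) (hy : y ∈ Set.Icc (0:ℝ) 1)
    (f : ℝ → ℝ) (hf : ConvexOn ℝ (Set.Icc 0 1) f) (hfc : ContinuousOn f (Set.Icc 0 1)) :
    ∑ i ∈ Finset.range (n+1), ∑ j ∈ Finset.range (n+1),
      bern n i x * bern n j y * f ((i + j : ℝ) / (2 * n))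
      ≤ bernOp (2 * n) f ((x + y) / 2) := by
  have hm01 : (x+y)/2 ∈ Set.Icc (0:ℝ) 1 := by
    constructor
    · have := hx.1; have := hy.1; linarith
    · have := hx.2; have := hy.2; linarith
  set g : ℕ → ℝ := fun s => f ((s:ℝ) / (2*(n:ℝ))) with hgdef
  have gconv : ∀ s : ℕ, s + 2 ≤ 2*n → 2 * g (s+1) ≤ g s + g (s+2) := by
    intro s hs
    have hn : 0 < n := by omega
    have hnR : (0:ℝ) < 2*(n:ℝ) := by
      have : (0:ℝ) < (n:ℝ) := by exact_mod_cast hn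
      linarith
    have hsR : (s:ℝ) + 2 ≤ 2*(n:ℝ) := by exact_mod_cast hs
    have hu : (s:ℝ)/(2*(n:ℝ)) ∈ Set.Icc (0:ℝ) 1 :=
      ⟨by positivity, by rw [div_le_one hnR]; linarith⟩
    have hv : ((s:ℝ)+2)/(2*(n:ℝ)) ∈ Set.Icc (0:ℝ) 1 :=
      ⟨by positivity, by rw [div_le_one hnR]; linarith⟩
    have hcvx := hf.2 hu hv (by norm_num : (0:ℝ) ≤ 1/2) (by norm_num : (0:ℝ) ≤ 1/2)
      (by norm_num : (1:ℝ)/2 + 1/2 = 1)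
    simp only [smul_eq_mul] at hcvx
    have emid : 1/2 * ((s:ℝ)/(2*(n:ℝ))) + 1/2 * (((s:ℝ)+2)/(2*(n:ℝ)))
        = ((s:ℝ)+1)/(2*(n:ℝ)) := by
      field_simp
      ring
    rw [emid] at hcvx
    show 2 * f ((((s+1):ℕ):ℝ) / (2*(n:ℝ))) ≤ f (((s:ℕ):ℝ) / (2*(n:ℝ))) + f ((((s+2):ℕ):ℝ) / (2*(n:ℝ)))
    push_cast
    linarith
  have main : ∀ k, k ≤ n →
      dsum x y k (fun s => sumB (2*(n-k)) ((x+y)/2) (fun l => g (s+l)))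
        ≤ dsum x y 0 (fun s => sumB (2*(n-0)) ((x+y)/2) (fun l => g (s+l))) := by
    intro k
    induction k with
    | zero => intro _; exact le_rfl
    | succ k ih =>
      intro hk
      have hk' : k ≤ n := by omega
      refine le_trans ?_ (ih hk')
      refine key hx hy k _ _ ?_ ?_
      · intro s
        show sumB (2*(n-k)) ((x+y)/2) (fun l => g (s+l))
          = (1-(x+y)/2)^2 * sumB (2*(n-(k+1))) ((x+y)/2) (fun l => g (s+l))
            + 2*((x+y)/2)*(1-(x+y)/2) * sumB (2*(n-(k+1))) ((x+y)/2) (fun l => g (s+1+l))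
            + ((x+y)/2)^2 * sumB (2*(n-(k+1))) ((x+y)/2) (fun l => g (s+2+l))
        rw [show 2*(n-k) = 2*(n-(k+1))+1+1 from by omega, sumB_succ2]
        congr 1
        · congr 1
          exact congrArg _ (sumB_congr fun l => by
            show g (s+(l+1)) = g (s+1+l); rw [show s+(l+1) = s+1+l from by omega])
        · exact congrArg _ (sumB_congr fun l => by
            show g (s+(l+1+1)) = g (s+2+l); rw [show s+(l+1+1) = s+2+l from by omega])
      · intro s hs
        show 2 * sumB (2*(n-(k+1))) ((x+y)/2) (fun l => g (s+1+l))
          ≤ sumB (2*(n-(k+1))) ((x+y)/2) (fun l => g (s+l))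
            + sumB (2*(n-(k+1))) ((x+y)/2) (fun l => g (s+2+l))
        have hcomb : sumB (2*(n-(k+1))) ((x+y)/2) (fun l => g (s+l))
            + sumB (2*(n-(k+1))) ((x+y)/2) (fun l => g (s+2+l))
            - 2 * sumB (2*(n-(k+1))) ((x+y)/2) (fun l => g (s+1+l))
            = sumB (2*(n-(k+1))) ((x+y)/2) (fun l => g (s+l) + g (s+2+l) - 2 * g (s+1+l)) := by
          unfold sumB
          rw [Finset.mul_sum, ← Finset.sum_add_distrib, ← Finset.sum_sub_distrib]
          exact Finset.sum_congr rfl fun l _ => by ring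
        have pos : 0 ≤ sumB (2*(n-(k+1))) ((x+y)/2)
            (fun l => g (s+l) + g (s+2+l) - 2 * g (s+1+l)) := by
          apply sumB_nonneg hm01
          intro l hl
          have h1 := gconv (s+l) (by omega)
          have e1 : g (s+1+l) = g (s+l+1) := by rw [show s+1+l = s+l+1 from by omega]
          have e2 : g (s+2+l) = g (s+l+2) := by rw [show s+2+l = s+l+2 from by omega]
          rw [e1, e2]
          linarith
        linarith
  have eL : (∑ i ∈ Finset.range (n+1), ∑ j ∈ Finset.range (n+1),
        bern n i x * bern n j y * f ((i + j : ℝ) / (2 * n)))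
      = dsum x y n (fun s => sumB (2*(n-n)) ((x+y)/2) (fun l => g (s+l))) := by
    unfold dsum
    refine Finset.sum_congr rfl fun i _ => Finset.sum_congr rfl fun j _ => ?_
    rw [show 2*(n-n) = 0 from by omega]
    show bern n i x * bern n j y * f ((i + j : ℝ) / (2 * n))
      = bern n i x * bern n j y * sumB 0 ((x+y)/2) (fun l => g (i+j+l))
    have : sumB 0 ((x+y)/2) (fun l => g (i+j+l)) = g (i+j) := by
      unfold sumB
      simp [bern]
    rw [this]
    show _ = bern n i x * bern n j y * f ((((i+j):ℕ):ℝ) / (2*(n:ℝ)))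
    push_cast
    ring_nf
  have eR : dsum x y 0 (fun s => sumB (2*(n-0)) ((x+y)/2) (fun l => g (s+l)))
      = bernOp (2*n) f ((x+y)/2) := by
    unfold dsum
    rw [Finset.sum_range_one, Finset.sum_range_one]
    show bern 0 0 x * bern 0 0 y * sumB (2*(n-0)) ((x+y)/2) (fun l => g (0+0+l))
      = bernOp (2*n) f ((x+y)/2)
    rw [show bern 0 0 x = 1 from by simp [bern], show bern 0 0 y = 1 from by simp [bern],
      one_mul, one_mul, show 2*(n-0) = 2*n from by omega]
    unfold sumB bernOp
    refine Finset.sum_congr rfl fun l _ => ?_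
    congr 1
    show f ((((0+0+l):ℕ):ℝ)/(2*(n:ℝ))) = f ((l:ℝ)/((2*n:ℕ):ℝ))
    congr 1
    push_cast
    ring
  rw [eL, eR.symm]
  exact main n le_rfl
end

section
/- Let m ≥ 2 be a natural number and a₁, …, a_m nonnegative reals. Then (a₁ + ⋯ + a_m)^m − m^m a₁⋯a_m = ∑_{1 ≤ i < j ≤ m} (a_i − a_j)² P_{ij}(a₁,…,a_m), where each P_{ij} is a homogeneous polynomial of degree m−2 with nonnegative coefficients. In particular, (a₁ + ⋯ + a_m)^m ≥ m^m a₁⋯a_m. -/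
/-!
Write `s = ∑ aᵢ` and `eₖ` for the elementary symmetric polynomials. Lagrange's identity applied to
`a` and `yᵢ = e_{k+1}(a without aᵢ)`, for which `yᵢ - yⱼ = (aⱼ - aᵢ) eₖ(a without aᵢ, aⱼ)`, gives
`(m - k - 1) s e_{k+1} - m (k + 2) e_{k+2} = ∑_{i<j} (aᵢ - aⱼ)² eₖ(a without aᵢ, aⱼ)`.
Hence the quantities `tⱼ = mʲ s^(m-j) eⱼ / C(m, j)` telescope from `t₁ = sᵐ` to `tₘ = mᵐ a₁⋯aₘ`, each
difference `t_{k+1} - t_{k+2}` being a positive multiple of `s^(m-2-k)` times the sum above.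
Collecting these differences pair by pair gives the polynomials `P i j`, built over `ℝ≥0` so that
their coefficients are nonnegative.
-/

open Finset

namespace Finset

variable {ι R : Type*}

section CommSemiring

variable [CommSemiring R]

def esymm (s : Finset ι) (f : ι → R) (n : ℕ) : R :=
  ∑ t ∈ s.powersetCard n, ∏ i ∈ t, f i

variable (s : Finset ι) (f : ι → R)

@[simp]
theorem esymm_zero : s.esymm f 0 = 1 := by
  simp [esymm]

theorem esymm_one : s.esymm f 1 = ∑ i ∈ s, f i := by
  simp [esymm, powersetCard_one]

theorem esymm_card : s.esymm f #s = ∏ i ∈ s, f i := by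
  simp [esymm, powersetCard_self]

theorem map_esymm {S F : Type*} [CommSemiring S] [FunLike F R S] [RingHomClass F R S] (g : F)
    (n : ℕ) : g (s.esymm f n) = s.esymm (g ∘ f) n := by
  simp [esymm, map_sum, map_prod]

variable [DecidableEq ι]

theorem esymm_insert_succ {a : ι} (ha : a ∉ s) (n : ℕ) :
    (insert a s).esymm f (n + 1) = s.esymm f (n + 1) + f a * s.esymm f n := by
  have hdisj : Disjoint (s.powersetCard (n + 1)) ((s.powersetCard n).image (insert a)) := by
    simp only [disjoint_right, mem_image, mem_powersetCard]
    rintro _ ⟨t, -, rfl⟩ ⟨hts, -⟩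
    exact ha (hts (mem_insert_self a t))
  have hinj : Set.InjOn (insert a) (s.powersetCard n : Set (Finset ι)) := by
    intro t ht u hu htu
    have hat : a ∉ t := fun h => ha ((mem_powersetCard.1 ht).1 h)
    have hau : a ∉ u := fun h => ha ((mem_powersetCard.1 hu).1 h)
    rw [← erase_insert hat, ← erase_insert hau, htu]
  rw [esymm, powersetCard_succ_insert ha, sum_union hdisj, sum_image hinj, esymm, esymm, mul_sum]
  congr 1
  refine sum_congr rfl fun t ht => prod_insert fun h => ha ?_
  exact (mem_powersetCard.1 ht).1 h

theorem sum_mul_esymm_erase (n : ℕ) :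
    ∑ i ∈ s, f i * (s.erase i).esymm f n = (n + 1) * s.esymm f (n + 1) := by
  induction s using Finset.induction_on generalizing n with
  | empty => rw [esymm, powersetCard_eq_empty.2 (by simp)]; simp
  | @insert a s ha ih =>
    have herase : ∀ i ∈ s, (insert a s).erase i = insert a (s.erase i) := fun i hi =>
      erase_insert_of_ne (by rintro rfl; exact ha hi)
    rw [sum_insert ha, erase_insert ha, sum_congr rfl fun i hi => by rw [herase i hi]]
    cases n with
    | zero =>
      simp only [esymm_zero, mul_one, zero_add, esymm_one, sum_insert ha]
      ring
    | succ n =>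
      have hexpand : ∀ i ∈ s, f i * (insert a (s.erase i)).esymm f (n + 1)
          = f i * (s.erase i).esymm f (n + 1) + f a * (f i * (s.erase i).esymm f n) := by
        intro i _
        rw [esymm_insert_succ _ _ (fun h => ha (mem_of_mem_erase h))]
        ring
      rw [sum_congr rfl hexpand, sum_add_distrib, ← mul_sum, ih, ih, esymm_insert_succ _ _ ha]
      push_cast
      ring

end CommSemiring

section CommRing

variable [CommRing R] [DecidableEq ι] (s : Finset ι) (f : ι → R)

theorem sum_esymm_erase (n : ℕ) :
    ∑ i ∈ s, (s.erase i).esymm f n = (#s - n) * s.esymm f n := by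
  cases n with
  | zero => simp
  | succ n =>
    have hsplit : ∀ i ∈ s,
        s.esymm f (n + 1) = (s.erase i).esymm f (n + 1) + f i * (s.erase i).esymm f n := by
      intro i hi
      conv_lhs => rw [← insert_erase hi]
      exact esymm_insert_succ _ _ (notMem_erase i s) n
    have hsum := sum_congr rfl hsplit
    rw [sum_const, nsmul_eq_mul, sum_add_distrib, sum_mul_esymm_erase] at hsum
    push_cast
    linear_combination -hsum

theorem esymm_erase_sub_esymm_erase {i j : ι} (hi : i ∈ s) (hj : j ∈ s) (n : ℕ) :
    (s.erase i).esymm f (n + 1) - (s.erase j).esymm f (n + 1)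
      = (f j - f i) * ((s.erase i).erase j).esymm f n := by
  obtain rfl | hij := eq_or_ne i j
  · ring
  have hi' : s.erase i = insert j ((s.erase i).erase j) :=
    (insert_erase (mem_erase.2 ⟨hij.symm, hj⟩)).symm
  have hj' : s.erase j = insert i ((s.erase i).erase j) := by
    rw [erase_right_comm, insert_erase (mem_erase.2 ⟨hij, hi⟩)]
  rw [hi', hj', esymm_insert_succ _ _ (notMem_erase _ _),
    esymm_insert_succ _ _ (fun h => (mem_erase.1 (mem_of_mem_erase h)).1 rfl), ← hi']
  ring

end CommRing

section LinearOrder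

variable [Fintype ι] [LinearOrder ι]

theorem sum_eq_two_nsmul_sum_filter_lt {M : Type*} [AddCommMonoid M] (f : ι → ι → M)
    (hsymm : ∀ i j, f i j = f j i) (hdiag : ∀ i, f i i = 0) :
    ∑ p : ι × ι, f p.1 p.2 = 2 • ∑ p ∈ univ.filter (fun p : ι × ι => p.1 < p.2), f p.1 p.2 := by
  rw [← sum_filter_add_sum_filter_not univ (fun p : ι × ι => p.1 < p.2), two_nsmul]
  congr 1
  have hgt : ∑ p ∈ univ.filter (fun p : ι × ι => ¬ p.1 < p.2), f p.1 p.2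
      = ∑ p ∈ univ.filter (fun p : ι × ι => p.2 < p.1), f p.1 p.2 := by
    rw [sum_filter, sum_filter]
    refine sum_congr rfl fun p _ => ?_
    rcases lt_trichotomy p.1 p.2 with h | h | h
    · simp [h, h.not_gt]
    · simp [h, hdiag]
    · simp [h, h.not_gt]
  rw [hgt]
  exact sum_equiv (Equiv.prodComm ι ι) (by simp) fun p _ => hsymm _ _

variable [CommRing R] [IsAddTorsionFree R]

theorem sum_filter_lt_sub_mul_sub (x y : ι → R) :
    ∑ p ∈ univ.filter (fun p : ι × ι => p.1 < p.2), (x p.1 - x p.2) * (y p.1 - y p.2)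
      = Fintype.card ι * ∑ i, x i * y i - (∑ i, x i) * ∑ i, y i := by
  apply nsmul_right_injective two_ne_zero
  dsimp only
  rw [← sum_eq_two_nsmul_sum_filter_lt (fun i j => (x i - x j) * (y i - y j))
    (fun _ _ => by ring) (fun _ => by ring)]
  simp only [Fintype.sum_prod_type, sub_mul, mul_sub, sum_sub_distrib, ← mul_sum, ← sum_mul,
    sum_const, card_univ, nsmul_eq_mul, mul_left_comm (x _)]
  ring

theorem sum_filter_lt_sq_sub_mul_esymm (a : ι → R) (n : ℕ) :
    ∑ p ∈ univ.filter (fun p : ι × ι => p.1 < p.2),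
        (a p.1 - a p.2) ^ 2 * ((univ.erase p.1).erase p.2).esymm a n
      = (∑ i, a i) * (Fintype.card ι - (n + 1)) * univ.esymm a (n + 1)
          - Fintype.card ι * (n + 2) * univ.esymm a (n + 2) := by
  have hterm : ∀ p ∈ univ.filter (fun p : ι × ι => p.1 < p.2),
      (a p.1 - a p.2) ^ 2 * ((univ.erase p.1).erase p.2).esymm a n
        = -((a p.1 - a p.2) *
            ((univ.erase p.1).esymm a (n + 1) - (univ.erase p.2).esymm a (n + 1))) := by
    intro p _
    rw [esymm_erase_sub_esymm_erase _ _ (mem_univ _) (mem_univ _)]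
    ring
  rw [sum_congr rfl hterm, sum_neg_distrib,
    sum_filter_lt_sub_mul_sub a fun i => (univ.erase i).esymm a (n + 1), sum_mul_esymm_erase,
    sum_esymm_erase, card_univ]
  push_cast
  ring

end LinearOrder

end Finset

def amgmCoeff (K : Type*) [Semifield K] (m k : ℕ) : K :=
  (m : K) ^ (k + 1) / (m.choose (k + 1) * (m - (k + 1) : ℕ))

theorem map_amgmCoeff {K L : Type*} [Semifield K] [Semifield L] (f : K →+* L) (m k : ℕ) :
    f (amgmCoeff K m k) = amgmCoeff L m k := by
  simp only [amgmCoeff, map_div₀, map_pow, map_mul, map_natCast]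

section Telescope

variable {ι K : Type*} [Fintype ι] [Field K]

def amgmTerm (a : ι → K) (j : ℕ) : K :=
  (Fintype.card ι : K) ^ j * (∑ i, a i) ^ (Fintype.card ι - j) * univ.esymm a j /
    (Fintype.card ι).choose j

theorem amgmTerm_card (a : ι → K) :
    amgmTerm a (Fintype.card ι) = (Fintype.card ι : K) ^ Fintype.card ι * ∏ i, a i := by
  simp [amgmTerm, ← card_univ, esymm_card]

variable [CharZero K]

theorem amgmTerm_one [Nonempty ι] (a : ι → K) : amgmTerm a 1 = (∑ i, a i) ^ Fintype.card ι := by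
  have hm : (Fintype.card ι : K) ≠ 0 := Nat.cast_ne_zero.2 Fintype.card_ne_zero
  rw [amgmTerm, esymm_one, Nat.choose_one_right, pow_one, mul_assoc, ← pow_succ,
    Nat.sub_add_cancel Fintype.card_pos]
  field_simp

variable [LinearOrder ι]

theorem amgmTerm_sub_amgmTerm_succ (a : ι → K) {k : ℕ} (hk : k + 2 ≤ Fintype.card ι) :
    amgmTerm a (k + 1) - amgmTerm a (k + 2)
      = amgmCoeff K (Fintype.card ι) k * (∑ i, a i) ^ (Fintype.card ι - 2 - k) *
        ∑ p ∈ univ.filter (fun p : ι × ι => p.1 < p.2),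
          (a p.1 - a p.2) ^ 2 * ((univ.erase p.1).erase p.2).esymm a k := by
  rw [amgmTerm, amgmTerm, sum_filter_lt_sq_sub_mul_esymm, amgmCoeff]
  set m := Fintype.card ι
  set s := ∑ i, a i
  have hchoose : (m.choose (k + 2) : K) * (k + 2) = m.choose (k + 1) * (m - (k + 1) : ℕ) := by
    exact_mod_cast Nat.choose_succ_right_eq m (k + 1)
  have h1 : (m.choose (k + 1) : K) ≠ 0 := Nat.cast_ne_zero.2 (Nat.choose_pos (by omega)).ne'
  have h2 : (m.choose (k + 2) : K) ≠ 0 := Nat.cast_ne_zero.2 (Nat.choose_pos hk).ne'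
  have h3 : ((m - (k + 1) : ℕ) : K) ≠ 0 := Nat.cast_ne_zero.2 (by omega)
  have hs1 : s ^ (m - (k + 1)) = s ^ (m - 2 - k) * s := by rw [← pow_succ]; congr 1; omega
  have hs2 : m - (k + 2) = m - 2 - k := by omega
  rw [hs1, hs2, Nat.cast_sub (by omega : k + 1 ≤ m)]
  rw [Nat.cast_sub (by omega : k + 1 ≤ m)] at hchoose h3
  field_simp
  push_cast at hchoose ⊢
  linear_combination s ^ (m - 2 - k) * (m : K) ^ (k + 2) * univ.esymm a (k + 2) * hchoose

theorem sum_pow_card_sub_mul_prod_eq (a : ι → K) :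
    (∑ i, a i) ^ Fintype.card ι - (Fintype.card ι : K) ^ Fintype.card ι * ∏ i, a i
      = ∑ p ∈ univ.filter (fun p : ι × ι => p.1 < p.2), (a p.1 - a p.2) ^ 2 *
          ∑ k ∈ range (Fintype.card ι - 1), amgmCoeff K (Fintype.card ι) k *
            (∑ i, a i) ^ (Fintype.card ι - 2 - k) * ((univ.erase p.1).erase p.2).esymm a k := by
  cases isEmpty_or_nonempty ι
  · simp
  set m := Fintype.card ι
  calc (∑ i, a i) ^ m - m ^ m * ∏ i, a i = amgmTerm a 1 - amgmTerm a (m - 1 + 1) := by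
        rw [amgmTerm_one, Nat.sub_add_cancel Fintype.card_pos, amgmTerm_card]
    _ = ∑ k ∈ range (m - 1), (amgmTerm a (k + 1) - amgmTerm a (k + 2)) :=
      (sum_range_sub' (fun k => amgmTerm a (k + 1)) _).symm
    _ = ∑ k ∈ range (m - 1), amgmCoeff K m k * (∑ i, a i) ^ (m - 2 - k) *
          ∑ p ∈ univ.filter (fun p : ι × ι => p.1 < p.2),
            (a p.1 - a p.2) ^ 2 * ((univ.erase p.1).erase p.2).esymm a k :=
      sum_congr rfl fun k hk => amgmTerm_sub_amgmTerm_succ a (by rw [mem_range] at hk; omega)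
    _ = _ := by
      simp only [mul_sum]
      rw [sum_comm]
      exact sum_congr rfl fun _ _ => sum_congr rfl fun _ _ => by ring

end Telescope

open MvPolynomial NNReal

theorem Finset.isHomogeneous_esymm_X {σ R : Type*} [CommSemiring R] (s : Finset σ) (n : ℕ) :
    (s.esymm X n : MvPolynomial σ R).IsHomogeneous n := by
  refine IsHomogeneous.sum _ _ _ fun t ht => ?_
  simpa [(mem_powersetCard.1 ht).2] using
    IsHomogeneous.prod t X (fun _ => 1) fun i _ => isHomogeneous_X R i

theorem MvPolynomial.eval_map_nnreal_nonneg {σ : Type*} (p : MvPolynomial σ ℝ≥0) {a : σ → ℝ}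
    (ha : ∀ i, 0 ≤ a i) : 0 ≤ eval a (map (algebraMap ℝ≥0 ℝ) p) := by
  lift a to σ → ℝ≥0 using ha
  rw [eval_map]
  exact (eval₂_comp_left NNReal.toRealHom (RingHom.id _) a p) ▸ NNReal.coe_nonneg (eval a p)

section AmgmPoly

variable {ι : Type*} [Fintype ι] [DecidableEq ι]

noncomputable def amgmPoly (i j : ι) : MvPolynomial ι ℝ≥0 :=
  ∑ k ∈ range (Fintype.card ι - 1), C (amgmCoeff ℝ≥0 (Fintype.card ι) k) *
    (∑ l, X l) ^ (Fintype.card ι - 2 - k) *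
      ((univ.erase i).erase j).esymm (X : ι → MvPolynomial ι ℝ≥0) k

theorem isHomogeneous_amgmPoly (i j : ι) :
    (amgmPoly i j).IsHomogeneous (Fintype.card ι - 2) := by
  refine IsHomogeneous.sum _ _ _ fun k hk => ?_
  convert ((isHomogeneous_C _ _).mul
    ((IsHomogeneous.sum _ _ _ fun l _ => isHomogeneous_X ℝ≥0 l).pow _)).mul
    (isHomogeneous_esymm_X _ k) using 1
  rw [mem_range] at hk
  omega

theorem eval_map_amgmPoly (i j : ι) (a : ι → ℝ) :
    eval a (map (algebraMap ℝ≥0 ℝ) (amgmPoly i j)) = ∑ k ∈ range (Fintype.card ι - 1),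
      amgmCoeff ℝ (Fintype.card ι) k * (∑ l, a l) ^ (Fintype.card ι - 2 - k) *
        ((univ.erase i).erase j).esymm a k := by
  rw [amgmPoly, eval_map, ← coe_eval₂Hom]
  simp only [map_sum, map_mul, map_pow, Finset.map_esymm, eval₂Hom_C, eval₂Hom_X',
    Function.comp_def, map_amgmCoeff]

end AmgmPoly

theorem stmt4_general (m : ℕ) :
    ∃ P : Fin m → Fin m → MvPolynomial (Fin m) ℝ,
      (∀ i j : Fin m, (P i j).IsHomogeneous (m - 2) ∧
        ∀ d : Fin m →₀ ℕ, 0 ≤ MvPolynomial.coeff d (P i j)) ∧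
      (∀ a : Fin m → ℝ, (∀ i, 0 ≤ a i) →
        (∑ i, a i) ^ m - (m : ℝ) ^ m * ∏ i, a i
          = ∑ p ∈ Finset.univ.filter (fun p : Fin m × Fin m => p.1 < p.2),
              (a p.1 - a p.2) ^ 2 * MvPolynomial.eval a (P p.1 p.2)) ∧
      (∀ a : Fin m → ℝ, (∀ i, 0 ≤ a i) → (m : ℝ) ^ m * ∏ i, a i ≤ (∑ i, a i) ^ m) := by
  have hsos : ∀ a : Fin m → ℝ, (∑ i, a i) ^ m - (m : ℝ) ^ m * ∏ i, a i
      = ∑ p ∈ univ.filter (fun p : Fin m × Fin m => p.1 < p.2),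
          (a p.1 - a p.2) ^ 2 * eval a (map (algebraMap ℝ≥0 ℝ) (amgmPoly p.1 p.2)) := by
    intro a
    simpa only [eval_map_amgmPoly, Fintype.card_fin] using sum_pow_card_sub_mul_prod_eq a
  refine ⟨fun i j => map (algebraMap ℝ≥0 ℝ) (amgmPoly i j), fun i j => ⟨?_, fun d => ?_⟩,
    fun a _ => hsos a, fun a ha => ?_⟩
  · simpa only [Fintype.card_fin] using (isHomogeneous_amgmPoly i j).map _
  · rw [coeff_map]
    exact NNReal.coe_nonneg _
  · rw [← sub_nonneg, hsos a]
    exact sum_nonneg fun p _ => mul_nonneg (sq_nonneg _) (eval_map_nnreal_nonneg _ ha)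

theorem stmt4 (m : ℕ) (hm : 2 ≤ m) :
    ∃ P : Fin m → Fin m → MvPolynomial (Fin m) ℝ,
      (∀ i j : Fin m, (P i j).IsHomogeneous (m - 2) ∧
        ∀ d : Fin m →₀ ℕ, 0 ≤ MvPolynomial.coeff d (P i j)) ∧
      (∀ a : Fin m → ℝ, (∀ i, 0 ≤ a i) →
        (∑ i, a i) ^ m - (m : ℝ) ^ m * ∏ i, a i
          = ∑ p ∈ Finset.univ.filter (fun p : Fin m × Fin m => p.1 < p.2),
              (a p.1 - a p.2) ^ 2 * MvPolynomial.eval a (P p.1 p.2)) ∧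
      (∀ a : Fin m → ℝ, (∀ i, 0 ≤ a i) → (m : ℝ) ^ m * ∏ i, a i ≤ (∑ i, a i) ^ m) :=
  stmt4_general m
end

section
/- Let n ∈ ℕ, x, y ∈ [0,1] with x ≠ y, and g_n(x,z) = (1 − x + xz)^n. Write (g_n(x,z) − g_n(y,z))/(z − 1) = ∑_{k=0}^{n−1} β_{n,k}(x,y) z^k. Then sign(β_{n,k}(x,y)) = sign(x − y) for all 0 ≤ k ≤ n−1. -/
/-!
Synthetic division by `z - 1` gives `β_{n,k}(x,y) = ∑_{i>k} (b_{n,i}(x) - b_{n,i}(y))`, where the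
`b_{n,i}` are the Bernstein polynomials, i.e. `β_{n,k}(x,y) = T(x) - T(y)` for the binomial tail
`T(t) = P(Bin(n,t) > k)`. The derivative of the tail telescopes to `n b_{n-1,k}(t)`, which is
positive on `(0,1)`, so `T` is strictly increasing on `[0,1]`.
-/

open Polynomial Finset

section CommRing

variable {R : Type*} [CommRing R]

lemma coeff_C_add_C_mul_X_pow (a : R) (n i : ℕ) :
    ((C (1 - a) + C a * X) ^ n).coeff i = (bernsteinPolynomial R n i).eval a := by
  have hterm (m : ℕ) : (C a * X) ^ m * C (1 - a) ^ (n - m) * (n.choose m : R[X])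
      = C ((bernsteinPolynomial R n m).eval a) * X ^ m := by
    simp only [bernsteinPolynomial, eval_mul, eval_pow, eval_X, eval_sub, eval_one, eval_C,
      mul_pow, C_mul, C_pow, ← C_eq_natCast]
    ring
  rw [add_comm, add_pow, finsetSum_coeff]
  simp_rw [hterm, coeff_C_mul_X_pow]
  rw [sum_ite_eq, ite_eq_left_iff]
  intro hi
  rw [bernsteinPolynomial.eq_zero_of_lt R (by simpa [Nat.lt_succ_iff] using hi), eval_zero]

lemma coeff_divByMonic_X_sub_C_one {p : R[X]} {N : ℕ} (hp : p.natDegree ≤ N) (k : ℕ) :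
    (p /ₘ (X - C 1)).coeff k = ∑ i ∈ Ioc k N, p.coeff i := by
  rw [coeff_divByMonic_X_sub_C, ← Icc_add_one_left_eq_Ioc]
  simp only [one_pow, one_mul]
  exact sum_subset (Icc_subset_Icc_right hp) fun i hi hi' =>
    coeff_eq_zero_of_natDegree_lt (by simp_all)

lemma derivative_sum_Ioc_bernsteinPolynomial (n : ℕ) {k m : ℕ} (h : k ≤ m) :
    derivative (∑ ν ∈ Ioc k m, bernsteinPolynomial R n ν)
      = n * (bernsteinPolynomial R (n - 1) k - bernsteinPolynomial R (n - 1) m) := by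
  induction m, h using Nat.le_induction with
  | base => simp
  | succ m hkm ih =>
    rw [sum_Ioc_succ_top hkm, derivative_add, ih, bernsteinPolynomial.derivative_succ]
    ring

lemma derivative_sum_Ioc_bernsteinPolynomial_self {n k : ℕ} (h : k ≤ n) :
    derivative (∑ ν ∈ Ioc k n, bernsteinPolynomial R n ν)
      = n * bernsteinPolynomial R (n - 1) k := by
  rw [derivative_sum_Ioc_bernsteinPolynomial n h]
  rcases n.eq_zero_or_pos with rfl | hn
  · simp
  · rw [bernsteinPolynomial.eq_zero_of_lt R (Nat.sub_lt hn one_pos), sub_zero]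

lemma bernsteinPolynomial_eval_pos [PartialOrder R] [IsStrictOrderedRing R] {n ν : ℕ}
    (h : ν ≤ n) {t : R} (ht₀ : 0 < t) (ht₁ : t < 1) :
    0 < (bernsteinPolynomial R n ν).eval t := by
  have := Nat.choose_pos h
  have := sub_pos.2 ht₁
  simp only [bernsteinPolynomial, eval_mul, eval_pow, eval_natCast, eval_X, eval_sub, eval_one]
  positivity

end CommRing

lemma strictMonoOn_eval_sum_Ioc_bernsteinPolynomial {n k : ℕ} (hk : k < n) :
    StrictMonoOn (fun t : ℝ => (∑ ν ∈ Ioc k n, bernsteinPolynomial ℝ n ν).eval t)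
      (Set.Icc 0 1) := by
  refine strictMonoOn_of_deriv_pos (convex_Icc 0 1) (Polynomial.continuousOn _) fun t ht => ?_
  rw [interior_Icc] at ht
  rw [Polynomial.deriv, derivative_sum_Ioc_bernsteinPolynomial_self hk.le, eval_mul, eval_natCast]
  have hn : (0 : ℝ) < n := by exact_mod_cast (Nat.zero_le k).trans_lt hk
  exact mul_pos hn (bernsteinPolynomial_eval_pos (by omega) ht.1 ht.2)

lemma StrictMonoOn.sign_sub {s : Set ℝ} {f : ℝ → ℝ} (hf : StrictMonoOn f s) {x y : ℝ}
    (hx : x ∈ s) (hy : y ∈ s) : Real.sign (f x - f y) = Real.sign (x - y) := by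
  rcases lt_trichotomy x y with h | rfl | h
  · rw [Real.sign_of_neg (sub_neg.2 (hf hx hy h)), Real.sign_of_neg (sub_neg.2 h)]
  · simp
  · rw [Real.sign_of_pos (sub_pos.2 (hf hy hx h)), Real.sign_of_pos (sub_pos.2 h)]

theorem stmt13_general (n : ℕ) (x y : ℝ) (hx : x ∈ Set.Icc (0:ℝ) 1) (hy : y ∈ Set.Icc (0:ℝ) 1)
    (k : ℕ) (hk : k < n) :
    Real.sign ((((C (1 - x) + C x * X) ^ n - (C (1 - y) + C y * X) ^ n : Polynomial ℝ)
        /ₘ (X - C 1)).coeff k)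
      = Real.sign (x - y) := by
  have hdeg (a : ℝ) : ((C (1 - a) + C a * X) ^ n).natDegree ≤ n := by
    compute_degree!
  rw [coeff_divByMonic_X_sub_C_one ((natDegree_sub_le _ _).trans (max_le (hdeg x) (hdeg y)))]
  simp only [coeff_sub, coeff_C_add_C_mul_X_pow, sum_sub_distrib, ← eval_finsetSum]
  exact (strictMonoOn_eval_sum_Ioc_bernsteinPolynomial hk).sign_sub hx hy

theorem stmt13 (n : ℕ) (x y : ℝ) (hx : x ∈ Set.Icc (0:ℝ) 1) (hy : y ∈ Set.Icc (0:ℝ) 1)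
    (hxy : x ≠ y) (k : ℕ) (hk : k < n) :
    Real.sign ((((C (1 - x) + C x * X) ^ n - (C (1 - y) + C y * X) ^ n : Polynomial ℝ)
        /ₘ (X - C 1)).coeff k)
      = Real.sign (x - y) :=
  stmt13_general n x y hx hy k hk
end
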